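/- arXiv:2104.03966 — 6 statements merged into one kernel-verified Lean document; each statement's English description precedes it below -/
import Mathlib

section
/- Let (V, Y) be a random pair with V taking values in [0,∞)^d and Y ∈ {−1,+1}, p = P(Y = +1) ∈ (0,1). Assume conditional regular variation: for σ ∈ {−,+} there are nonzero Borel measures μ_σ on E, finite on Borel sets bounded away from 0 and homogeneous (μ_σ(λB) = λ^{−1}μ_σ(B) for all λ > 0 and Borel B ⊆ E), such that t·P(t^{−1}V ∈ B | Y = σ1) → μ_σ(B) as t → ∞ for every Borel B ⊆ E bounded away from 0 with μ_σ(∂B) = 0. Set Φ_σ(A) = μ_σ(C_A) and Φ = p·Φ_+ + (1−p)·Φ_−. Let g be an angular classifier and τ ∈ (0,1), and suppose the smoothness assumption holds: Φ(∂S_τ) = 0 and Φ(∂S_g^+) = Φ(∂S_g^−) = 0 (boundaries relative to S). Then as t → ∞: (a) t·P(g(V) ≠ Y, θ(V) ∈ S_τ, ‖V‖ ≥ t) → p·Φ_+(S_g^− ∩ S_τ) + (1−p)·Φ_−(S_g^+ ∩ S_τ); (b) t·P(g(V) ≠ Y, θ(V) ∉ S_τ, ‖V‖ ≥ t) → p·Φ_+(S_g^−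 \ S_τ) + (1−p)·Φ_−(S_g^+ \ S_τ); and (c) t·P(g(V) ≠ Y, ‖V‖ ≥ t) → p·Φ_+(S_g^−) + (1−p)·Φ_−(S_g^+). -/
open MeasureTheory ProbabilityTheory ENNReal Pointwise Filter Topology

noncomputable section

/-- The punctured nonnegative orthant `E = [0,∞)^d \ {0}`. -/
def Eorthant (d : ℕ) : Set (Fin d → ℝ) := {x | (∀ j, 0 ≤ x j) ∧ x ≠ 0}

/-- The sup-norm unit sphere in the nonnegative orthant. -/
def supSphere (d : ℕ) : Set (Fin d → ℝ) := {x | (∀ j, 0 ≤ x j) ∧ ‖x‖ = 1}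

/-- `S_τ = {x ∈ S : min_j x_j > τ}`. -/
def sphereTau (d : ℕ) (τ : ℝ) : Set (Fin d → ℝ) := {x ∈ supSphere d | ∀ j, τ < x j}

/-- The angle `θ(x) = x/‖x‖`. -/
def ang (d : ℕ) (x : Fin d → ℝ) : Fin d → ℝ := ‖x‖⁻¹ • x

/-- The cone `C_A = {x ∈ E : ‖x‖ ≥ 1, θ(x) ∈ A}`. -/
def coneOf (d : ℕ) (A : Set (Fin d → ℝ)) : Set (Fin d → ℝ) :=
  {x | x ∈ Eorthant d ∧ 1 ≤ ‖x‖ ∧ ang d x ∈ A}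

/-- A set is bounded away from the origin. -/
def BddAwayFromZero (d : ℕ) (B : Set (Fin d → ℝ)) : Prop :=
  ∃ ε > (0 : ℝ), ∀ x ∈ B, ε ≤ ‖x‖

/-- The boundary of `T` relative to the sphere `S`, viewed as a subset of the ambient space:
the frontier, within the subspace topology of `S`, of the trace of `T` on `S`. -/
def relBoundary (d : ℕ) (T : Set (Fin d → ℝ)) : Set (Fin d → ℝ) :=
  Subtype.val '' (frontier {y : supSphere d | (y : Fin d → ℝ) ∈ T})

/-- The unconditional angular measure `Φ = p·Φ₊ + (1−p)·Φ₋`, as a set function,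
where `Φ_σ(A) = μ_σ(C_A)`. -/
def mixAngular (d : ℕ) (p : ℝ) (μp μm : Measure (Fin d → ℝ))
    (T : Set (Fin d → ℝ)) : ℝ :=
  p * (μp (coneOf d T)).toReal + (1 - p) * (μm (coneOf d T)).toReal

/-!
Apply conditional regular variation to `t • posPartCone d A`, the cone over `A` enlarged to all
points whose positive part has its angle in `A`. On the orthant, where `V` lives, it agrees with
`coneOf d A`; but unlike `coneOf d A`, whose frontier contains the faces of the orthant (which
may carry mass), its frontier lies in the unit sphere, off the orthant, or in the cone over the
relative boundary of `A`. The first set is null by homogeneity, the second because `V ≥ 0`, the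
third by the smoothness assumption. For an angular region `R` (here `S_τ`, its complement or `S`),
the misclassification event above level `t` splits according to `Y` into
`{V ∈ t • posPartCone d (S_g⁻ ∩ R), Y = 1}` and `{V ∈ t • posPartCone d (S_g⁺ ∩ R), Y = -1}`.
-/

section Geometry

variable {d : ℕ}

def offOrthant (d : ℕ) : Set (Fin d → ℝ) := {x | ∀ j, 0 ≤ x j}ᶜ

def posPartCone (d : ℕ) (A : Set (Fin d → ℝ)) : Set (Fin d → ℝ) :=
  {x | 1 ≤ ‖x‖ ∧ x⁺ ≠ 0 ∧ ang d x⁺ ∈ A}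

lemma ang_smul {s : ℝ} (hs : 0 < s) (x : Fin d → ℝ) : ang d (s • x) = ang d x := by
  rcases eq_or_ne x 0 with rfl | hx
  · simp
  · rw [ang, ang, norm_smul_of_nonneg hs.le, smul_smul]
    congr 1
    field_simp

lemma ang_mem_supSphere {x : Fin d → ℝ} (hx : ∀ j, 0 ≤ x j) (hx0 : x ≠ 0) :
    ang d x ∈ supSphere d :=
  ⟨fun j => mul_nonneg (inv_nonneg.2 (norm_nonneg x)) (hx j),
    by rw [ang, norm_smul_of_nonneg (inv_nonneg.2 (norm_nonneg x)),
      inv_mul_cancel₀ (norm_ne_zero_iff.2 hx0)]⟩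

lemma continuousAt_ang {x : Fin d → ℝ} (hx : x ≠ 0) : ContinuousAt (ang d) x :=
  (continuous_norm.continuousAt.inv₀ (norm_ne_zero_iff.2 hx)).smul continuousAt_id

lemma measurable_ang : Measurable (ang d) := by
  unfold ang; fun_prop

lemma continuous_posPart_pi : Continuous fun x : Fin d → ℝ => x⁺ :=
  continuous_pi fun j => (continuous_apply j).max continuous_const

lemma isClosed_orthant : IsClosed {x : Fin d → ℝ | ∀ j, 0 ≤ x j} := by
  simp only [Set.ofPred_forall]
  exact isClosed_iInter fun j => isClosed_le continuous_const (continuous_apply j)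

lemma isClosed_supSphere : IsClosed (supSphere d) :=
  isClosed_orthant.inter (isClosed_eq continuous_norm continuous_const)

lemma measurableSet_sphereTau (τ : ℝ) : MeasurableSet (sphereTau d τ) := by
  have h : sphereTau d τ = supSphere d ∩ ⋂ j, {x | τ < x j} := by ext; simp [sphereTau]
  rw [h]
  exact isClosed_supSphere.measurableSet.inter
    (MeasurableSet.iInter fun j => measurableSet_lt measurable_const (measurable_pi_apply j))

lemma measurableSet_coneOf {A : Set (Fin d → ℝ)} (hA : MeasurableSet A) :
    MeasurableSet (coneOf d A) :=
  (isClosed_orthant.measurableSet.inter (measurableSet_singleton 0).compl).inter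
    ((measurableSet_le measurable_const measurable_norm).inter (measurable_ang hA))

lemma measurableSet_posPartCone {A : Set (Fin d → ℝ)} (hA : MeasurableSet A) :
    MeasurableSet (posPartCone d A) :=
  (measurableSet_le measurable_const measurable_norm).inter <| continuous_posPart_pi.measurable
    ((measurableSet_singleton 0).compl.inter (measurable_ang hA))

lemma relBoundary_eq (T : Set (Fin d → ℝ)) :
    relBoundary d T =
      supSphere d ∩ (closure (supSphere d ∩ T) ∩ closure (supSphere d \ T)) := by
  have hclosure : ∀ U : Set (Fin d → ℝ), Subtype.val '' closure (Subtype.val ⁻¹' U) =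
      supSphere d ∩ closure (supSphere d ∩ U) := fun U => by
    rw [Topology.IsInducing.subtypeVal.closure_eq_preimage_closure_image,
      Subtype.image_preimage_coe, Subtype.image_preimage_coe]
  change Subtype.val '' frontier (Subtype.val ⁻¹' T) = _
  rw [frontier_eq_closure_inter_closure, ← Set.preimage_compl,
    Set.image_inter Subtype.val_injective, hclosure, hclosure, ← Set.inter_inter_distrib_left]
  rfl

lemma isClosed_relBoundary (T : Set (Fin d → ℝ)) : IsClosed (relBoundary d T) := by
  rw [relBoundary_eq]
  exact isClosed_supSphere.inter (isClosed_closure.inter isClosed_closure)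

lemma relBoundary_compl (T : Set (Fin d → ℝ)) : relBoundary d Tᶜ = relBoundary d T := by
  simp only [relBoundary, Set.mem_compl_iff, ← Set.compl_ofPred, frontier_compl]

lemma relBoundary_inter_subset (T₁ T₂ : Set (Fin d → ℝ)) :
    relBoundary d (T₁ ∩ T₂) ⊆ relBoundary d T₁ ∪ relBoundary d T₂ := by
  simp only [relBoundary, Set.mem_inter_iff, Set.ofPred_and, ← Set.image_union]
  exact Set.image_mono ((frontier_inter_subset _ _).trans
    (Set.union_subset_union Set.inter_subset_left Set.inter_subset_right))

lemma relBoundary_univ : relBoundary d Set.univ = ∅ := by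
  simp [relBoundary]

lemma coneOf_mono {A B : Set (Fin d → ℝ)} (h : A ⊆ B) : coneOf d A ⊆ coneOf d B :=
  fun _ ⟨hE, h1, hA⟩ => ⟨hE, h1, h hA⟩

lemma coneOf_union (A B : Set (Fin d → ℝ)) :
    coneOf d (A ∪ B) = coneOf d A ∪ coneOf d B := by
  ext x
  simp only [coneOf, Set.mem_union, Set.mem_ofPred_eq]
  tauto

lemma posPartCone_inter_orthant (A : Set (Fin d → ℝ)) :
    posPartCone d A ∩ {x | ∀ j, 0 ≤ x j} = coneOf d A := by
  ext x
  simp only [posPartCone, coneOf, Eorthant, Set.mem_inter_iff, Set.mem_ofPred_eq]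
  constructor
  · rintro ⟨⟨h1, h0, hA⟩, hx⟩
    rw [posPart_eq_self.2 (show 0 ≤ x from hx)] at h0 hA
    exact ⟨⟨hx, h0⟩, h1, hA⟩
  · rintro ⟨⟨hx, h0⟩, h1, hA⟩
    rw [← posPart_eq_self.2 (show 0 ≤ x from hx)] at h0 hA
    exact ⟨⟨h1, h0, hA⟩, hx⟩

lemma mem_smul_posPartCone {t : ℝ} (ht : 0 < t) {x : Fin d → ℝ} (hx : ∀ j, 0 ≤ x j)
    (A : Set (Fin d → ℝ)) : x ∈ t • posPartCone d A ↔ t ≤ ‖x‖ ∧ ang d x ∈ A := by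
  have hx' : 0 ≤ t⁻¹ • x := fun j => mul_nonneg (inv_nonneg.2 ht.le) (hx j)
  rw [Set.mem_smul_set_iff_inv_smul_mem₀ ht.ne', posPartCone, Set.mem_ofPred_eq,
    posPart_eq_self.2 hx', ang_smul (inv_pos.2 ht), norm_smul_of_nonneg (inv_nonneg.2 ht.le),
    ← div_eq_inv_mul, one_le_div ht, smul_ne_zero_iff_right (inv_ne_zero ht.ne')]
  constructor
  · exact fun ⟨h1, _, hA⟩ => ⟨h1, hA⟩
  · rintro ⟨h1, hA⟩
    exact ⟨h1, norm_pos_iff.1 (ht.trans_le h1), hA⟩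

lemma ang_mem_relBoundary_of_mem_frontier {A : Set (Fin d → ℝ)} {x : Fin d → ℝ}
    (hx : x ∈ frontier (posPartCone d A)) (hx0 : ∀ j, 0 ≤ x j) (hx1 : 1 < ‖x‖) :
    ang d x ∈ relBoundary d A := by
  set N := {y : Fin d → ℝ | 1 < ‖y‖ ∧ y⁺ ≠ 0}
  have hxx : x⁺ = x := posPart_eq_self.2 hx0
  have hxN : x ∈ N := ⟨hx1, by rw [hxx]; exact norm_pos_iff.1 (one_pos.trans hx1)⟩
  have hN : IsOpen N :=
    (isOpen_lt continuous_const continuous_norm).inter (isOpen_ne.preimage continuous_posPart_pi)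
  have hρ : ContinuousAt (fun y => ang d y⁺) x :=
    (continuousAt_ang hxN.2).comp continuous_posPart_pi.continuousAt
  rw [frontier_eq_closure_inter_closure] at hx
  have h₁ := mem_closure_image hρ hx.1
  have h₂ := mem_closure_image hρ (hN.inter_closure ⟨hxN, hx.2⟩)
  simp only [hxx] at h₁ h₂
  rw [relBoundary_eq]
  refine ⟨ang_mem_supSphere hx0 (hxx ▸ hxN.2), closure_mono ?_ h₁, closure_mono ?_ h₂⟩
  · rintro _ ⟨y, ⟨-, hy0, hyA⟩, rfl⟩
    exact ⟨ang_mem_supSphere (posPart_nonneg y) hy0, hyA⟩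
  · rintro _ ⟨y, ⟨⟨hy1, hy0⟩, hyA⟩, rfl⟩
    exact ⟨ang_mem_supSphere (posPart_nonneg y) hy0, fun h => hyA ⟨hy1.le, hy0, h⟩⟩

lemma frontier_posPartCone_subset (A : Set (Fin d → ℝ)) :
    frontier (posPartCone d A) ⊆
      {x | ‖x‖ = 1} ∪ offOrthant d ∪ coneOf d (relBoundary d A) := by
  intro x hx
  have hx1 : 1 ≤ ‖x‖ := closure_minimal (fun y hy => hy.1)
    (isClosed_le continuous_const continuous_norm) (frontier_subset_closure hx)
  by_cases hO : x ∈ offOrthant d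
  · exact Or.inl (Or.inr hO)
  rcases hx1.eq_or_lt with h1 | h1
  · exact Or.inl (Or.inl h1.symm)
  have hx0 : ∀ j, 0 ≤ x j := by simpa [offOrthant] using hO
  exact Or.inr ⟨⟨hx0, norm_pos_iff.1 (one_pos.trans h1)⟩, h1.le,
    ang_mem_relBoundary_of_mem_frontier hx hx0 h1⟩

lemma frontier_setOf_exists_lt_subset (a : ℝ) :
    frontier {x : Fin d → ℝ | ∃ j, x j < a} ⊆ ⋃ j, {x | x j = a} := by
  have hopen : IsOpen {x : Fin d → ℝ | ∃ j, x j < a} := by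
    simp only [Set.ofPred_exists]
    exact isOpen_iUnion fun j => isOpen_lt (continuous_apply j) continuous_const
  have hclosed : IsClosed {x : Fin d → ℝ | ∃ j, x j ≤ a} := by
    simp only [Set.ofPred_exists]
    exact isClosed_iUnion_of_finite fun j => isClosed_le (continuous_apply j) continuous_const
  rw [hopen.frontier_eq]
  rintro x ⟨hcl, hx⟩
  obtain ⟨j, hj⟩ := closure_minimal (fun _ hy => hy.imp fun _ => le_of_lt) hclosed hcl
  simp only [Set.mem_ofPred_eq, not_exists, not_lt] at hx
  exact Set.mem_iUnion.2 ⟨j, le_antisymm hj (hx j)⟩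

end Geometry

structure IsExponentMeasure (d : ℕ) (μ : Measure (Fin d → ℝ)) : Prop where
  ne_top : ∀ B, MeasurableSet B → BddAwayFromZero d B → μ B ≠ ⊤
  smul : ∀ l : ℝ, 0 < l → ∀ B, MeasurableSet B → μ (l • B) = ENNReal.ofReal l⁻¹ * μ B

namespace IsExponentMeasure

variable {d : ℕ} {μ : Measure (Fin d → ℝ)}

lemma measure_coneOf_ne_top (hμ : IsExponentMeasure d μ) {A : Set (Fin d → ℝ)}
    (hA : MeasurableSet A) : μ (coneOf d A) ≠ ⊤ :=
  hμ.ne_top _ (measurableSet_coneOf hA) ⟨1, one_pos, fun _ hx => hx.2.1⟩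

/-- The dilates `s • {φ = c} = {φ = s * c}`, `1 < s < 2`, are uncountably many disjoint sets of
positive measure as soon as `{φ = c}` has positive measure, inside a set of finite measure. -/
theorem measure_levelSet_eq_zero (hμ : IsExponentMeasure d μ) {φ : (Fin d → ℝ) → ℝ}
    (hφ : Measurable φ) (hφs : ∀ s : ℝ, 0 < s → ∀ x, φ (s • x) = s * φ x) {c : ℝ} (hc : c ≠ 0)
    (hbdd : BddAwayFromZero d {x | φ x = c}) : μ {x | φ x = c} = 0 := by
  obtain ⟨ε, hε, hεN⟩ := hbdd
  set K := {x : Fin d → ℝ | ε ≤ ‖x‖}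
  have hK : MeasurableSet K := measurableSet_le measurable_const measurable_norm
  have : IsFiniteMeasure (μ.restrict K) :=
    ⟨by simpa using (hμ.ne_top K hK ⟨ε, hε, fun _ h => h⟩).lt_top⟩
  have hdil : ∀ s : ℝ, 0 < s → s • {x | φ x = c} = {x | φ x = s * c} := fun s hs => by
    ext x
    rw [Set.mem_smul_set_iff_inv_smul_mem₀ hs.ne', Set.mem_ofPred_eq, Set.mem_ofPred_eq,
      hφs _ (inv_pos.2 hs), inv_mul_eq_iff_eq_mul₀ hs.ne']
  have hcount := (Measure.countable_meas_level_set_pos (μ := μ.restrict K) hφ).preimage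
    (mul_left_injective₀ hc)
  by_contra hN
  refine (Cardinal.Real.Ioo_countable_iff (x := 1) (y := 2)).not.2 (by norm_num) (hcount.mono ?_)
  intro s ⟨hs1, _⟩
  have hs : 0 < s := one_pos.trans hs1
  have hsub : s • {x | φ x = c} ⊆ K := by
    rintro _ ⟨x, hx, rfl⟩
    rw [Set.mem_ofPred_eq, norm_smul_of_nonneg hs.le]
    nlinarith [hεN x hx, norm_nonneg x]
  rw [Set.mem_preimage, Set.mem_ofPred_eq, Measure.restrict_apply' hK, ← hdil s hs,
    Set.inter_eq_left.2 hsub, hμ.smul s hs {x | φ x = c} (hφ (measurableSet_singleton c))]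
  exact ENNReal.mul_pos (ENNReal.ofReal_pos.2 (inv_pos.2 hs)).ne' hN

lemma measure_sphere_eq_zero (hμ : IsExponentMeasure d μ) : μ {x | ‖x‖ = 1} = 0 :=
  hμ.measure_levelSet_eq_zero measurable_norm (fun _ hs x => norm_smul_of_nonneg hs.le x)
    one_ne_zero ⟨1, one_pos, fun _ h => h.ge⟩

lemma measure_coord_eq_zero (hμ : IsExponentMeasure d μ) (j : Fin d) {c : ℝ} (hc : c ≠ 0) :
    μ {x | x j = c} = 0 :=
  hμ.measure_levelSet_eq_zero (measurable_pi_apply j) (fun _ _ _ => rfl) hc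
    ⟨|c|, abs_pos.2 hc, fun x hx => by rw [← hx]; exact norm_le_pi_norm x j⟩

end IsExponentMeasure

section Risk

variable {d : ℕ} {Ω : Type*} [MeasurableSpace Ω] {P : Measure Ω} {V : Ω → Fin d → ℝ}

def CondRegularlyVarying (P : Measure Ω) (V : Ω → Fin d → ℝ) (E : Set Ω)
    (μ : Measure (Fin d → ℝ)) : Prop :=
  ∀ B : Set (Fin d → ℝ), MeasurableSet B → BddAwayFromZero d B → μ (frontier B) = 0 →
    Tendsto (fun t : ℝ => t * ((P {ω | V ω ∈ t • B ∧ ω ∈ E}).toReal / (P E).toReal))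
      atTop (𝓝 (μ B).toReal)

namespace CondRegularlyVarying

variable {E : Set Ω} {μ : Measure (Fin d → ℝ)}

theorem measure_offOrthant_eq_zero (h : CondRegularlyVarying P V E μ)
    (hμ : IsExponentMeasure d μ) (hV : ∀ᵐ ω ∂P, ∀ j, 0 ≤ V ω j) : μ (offOrthant d) = 0 := by
  have hW : ∀ δ : ℝ, 0 < δ → μ {x | ∃ j, x j < -δ} = 0 := by
    intro δ hδ
    set W := {x : Fin d → ℝ | ∃ j, x j < -δ}
    have hWm : MeasurableSet W := by
      simp only [W, Set.ofPred_exists]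
      exact MeasurableSet.iUnion fun j => measurableSet_lt (measurable_pi_apply j) measurable_const
    have hWb : BddAwayFromZero d W := ⟨δ, hδ, fun x ⟨j, hj⟩ =>
      (lt_abs.2 (Or.inr (lt_neg_of_lt_neg hj))).le.trans (norm_le_pi_norm x j)⟩
    have hWf : μ (frontier W) = 0 := measure_mono_null (frontier_setOf_exists_lt_subset _)
      (measure_iUnion_null fun j => hμ.measure_coord_eq_zero j (neg_ne_zero.2 hδ.ne'))
    have hzero : ∀ t : ℝ, 0 < t → P {ω | V ω ∈ t • W ∧ ω ∈ E} = 0 := by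
      intro t ht
      refine measure_mono_null ?_ (ae_iff.1 hV)
      rintro ω ⟨hω, -⟩ hpos
      obtain ⟨j, hj⟩ := (Set.mem_smul_set_iff_inv_smul_mem₀ ht.ne' _ _).1 hω
      exact (mul_nonneg (inv_nonneg.2 ht.le) (hpos j)).not_gt (hj.trans (neg_neg_of_pos hδ))
    have hlim : (μ W).toReal = 0 := tendsto_nhds_unique (h W hWm hWb hWf) <|
      tendsto_const_nhds.congr' <| by
        filter_upwards [eventually_gt_atTop 0] with t ht
        simp [hzero t ht]
    exact ((ENNReal.toReal_eq_zero_iff _).1 hlim).resolve_right (hμ.ne_top W hWm hWb)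
  refine measure_mono_null (fun x hx => ?_)
    (measure_iUnion_null fun n : ℕ => hW _ (Nat.one_div_pos_of_nat (n := n)))
  obtain ⟨j, hj⟩ := by simpa [offOrthant] using hx
  obtain ⟨n, hn⟩ := exists_nat_one_div_lt (neg_pos.2 hj)
  exact Set.mem_iUnion.2 ⟨n, j, by linarith⟩

theorem tendsto_mul_measure_smul_posPartCone [IsFiniteMeasure P] (h : CondRegularlyVarying P V E μ)
    (hμ : IsExponentMeasure d μ) (hV : ∀ᵐ ω ∂P, ∀ j, 0 ≤ V ω j) {A : Set (Fin d → ℝ)}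
    (hA : MeasurableSet A) (hAb : μ (coneOf d (relBoundary d A)) = 0) :
    Tendsto (fun t : ℝ => t * (P {ω | V ω ∈ t • posPartCone d A ∧ ω ∈ E}).toReal) atTop
      (𝓝 ((P E).toReal * (μ (coneOf d A)).toReal)) := by
  have hoff := h.measure_offOrthant_eq_zero hμ hV
  have hfr : μ (frontier (posPartCone d A)) = 0 :=
    measure_mono_null (frontier_posPartCone_subset A)
      (measure_union_null (measure_union_null hμ.measure_sphere_eq_zero hoff) hAb)
  have hcone : μ (posPartCone d A) = μ (coneOf d A) := by
    rw [← posPartCone_inter_orthant, measure_inter_conull hoff]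
  have hlim := (h _ (measurableSet_posPartCone hA) ⟨1, one_pos, fun _ hx => hx.1⟩ hfr).const_mul
    (P E).toReal
  rw [hcone] at hlim
  refine hlim.congr fun t => ?_
  rcases eq_or_ne (P E) 0 with hE | hE
  · have hnull : P {ω | V ω ∈ t • posPartCone d A ∧ ω ∈ E} = 0 :=
      measure_mono_null (fun _ hω => hω.2) hE
    simp [hE, hnull]
  · field_simp [ENNReal.toReal_ne_zero.2 ⟨hE, measure_ne_top P E⟩]

end CondRegularlyVarying

lemma misclassified_iff {g : (Fin d → ℝ) → ℝ} (hgpm : ∀ x ∈ Eorthant d, g x = 1 ∨ g x = -1)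
    (hgang : ∀ x ∈ Eorthant d, g x = g (ang d x)) (R : Set (Fin d → ℝ)) {t : ℝ} (ht : 0 < t)
    {x : Fin d → ℝ} (hx : ∀ j, 0 ≤ x j) {y : ℝ} (hy : y = 1 ∨ y = -1) :
    (g x ≠ y ∧ ang d x ∈ R ∧ t ≤ ‖x‖) ↔
      (x ∈ t • posPartCone d ({z ∈ supSphere d | g z = -1} ∩ R) ∧ y = 1) ∨
        (x ∈ t • posPartCone d ({z ∈ supSphere d | g z = 1} ∩ R) ∧ y = -1) := by
  rw [mem_smul_posPartCone ht hx, mem_smul_posPartCone ht hx]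
  by_cases htx : t ≤ ‖x‖
  · have hE : x ∈ Eorthant d := ⟨hx, norm_pos_iff.1 (ht.trans_le htx)⟩
    have hS := ang_mem_supSphere hx hE.2
    simp only [Set.mem_inter_iff, Set.mem_ofPred_eq, ← hgang x hE]
    rcases hgpm x hE with h | h <;> rcases hy with rfl | rfl <;> norm_num [h, hS, htx]
  · simp [htx]

lemma measure_misclassified_eq {Y : Ω → ℝ} {g : (Fin d → ℝ) → ℝ} {R : Set (Fin d → ℝ)}
    (hV : Measurable V) (hY : Measurable Y) (hg : Measurable g) (hR : MeasurableSet R)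
    (hVpos : ∀ᵐ ω ∂P, ∀ j, 0 ≤ V ω j) (hYpm : ∀ᵐ ω ∂P, Y ω = 1 ∨ Y ω = -1)
    (hgpm : ∀ x ∈ Eorthant d, g x = 1 ∨ g x = -1)
    (hgang : ∀ x ∈ Eorthant d, g x = g (ang d x)) {t : ℝ} (ht : 0 < t) :
    P {ω | g (V ω) ≠ Y ω ∧ ang d (V ω) ∈ R ∧ t ≤ ‖V ω‖} =
      P {ω | V ω ∈ t • posPartCone d ({z ∈ supSphere d | g z = -1} ∩ R) ∧ Y ω = 1} +
        P {ω | V ω ∈ t • posPartCone d ({z ∈ supSphere d | g z = 1} ∩ R) ∧ Y ω = -1} := by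
  have hmeas : MeasurableSet
      {ω | V ω ∈ t • posPartCone d ({z ∈ supSphere d | g z = 1} ∩ R) ∧ Y ω = -1} :=
    (hV ((measurableSet_posPartCone ((isClosed_supSphere.measurableSet.inter
      (hg (measurableSet_singleton 1))).inter hR)).const_smul₀ t)).inter
      (hY (measurableSet_singleton _))
  have hdisj : Disjoint
      {ω | V ω ∈ t • posPartCone d ({z ∈ supSphere d | g z = -1} ∩ R) ∧ Y ω = 1}
      {ω | V ω ∈ t • posPartCone d ({z ∈ supSphere d | g z = 1} ∩ R) ∧ Y ω = -1} :=
    Set.disjoint_left.2 fun ω h₁ h₂ => by linarith [h₁.2, h₂.2]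
  rw [← measure_union hdisj hmeas]
  refine measure_congr ?_
  filter_upwards [hVpos, hYpm] with ω hω hy
  exact propext (misclassified_iff hgpm hgang R ht hω hy)

lemma measure_coneOf_relBoundary_inter_eq_zero {μ : Measure (Fin d → ℝ)}
    {T₁ T₂ : Set (Fin d → ℝ)} (h₁ : μ (coneOf d (relBoundary d T₁)) = 0)
    (h₂ : μ (coneOf d (relBoundary d T₂)) = 0) :
    μ (coneOf d (relBoundary d (T₁ ∩ T₂))) = 0 :=
  measure_mono_null ((coneOf_mono (relBoundary_inter_subset T₁ T₂)).trans (coneOf_union _ _).le)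
    (measure_union_null h₁ h₂)

theorem tendsto_mul_measure_misclassified [IsFiniteMeasure P] {Y : Ω → ℝ} {μp μm : Measure (Fin d → ℝ)}
    {g : (Fin d → ℝ) → ℝ} {R : Set (Fin d → ℝ)} (hV : Measurable V) (hY : Measurable Y)
    (hVpos : ∀ᵐ ω ∂P, ∀ j, 0 ≤ V ω j) (hYpm : ∀ᵐ ω ∂P, Y ω = 1 ∨ Y ω = -1)
    (hμp : IsExponentMeasure d μp) (hμm : IsExponentMeasure d μm)
    (hRVp : CondRegularlyVarying P V {ω | Y ω = 1} μp)
    (hRVm : CondRegularlyVarying P V {ω | Y ω = -1} μm)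
    (hg : Measurable g) (hgpm : ∀ x ∈ Eorthant d, g x = 1 ∨ g x = -1)
    (hgang : ∀ x ∈ Eorthant d, g x = g (ang d x)) (hR : MeasurableSet R)
    (hgp : μp (coneOf d (relBoundary d {x ∈ supSphere d | g x = -1})) = 0)
    (hRp : μp (coneOf d (relBoundary d R)) = 0)
    (hgm : μm (coneOf d (relBoundary d {x ∈ supSphere d | g x = 1})) = 0)
    (hRm : μm (coneOf d (relBoundary d R)) = 0) :
    Tendsto (fun t : ℝ => t * (P {ω | g (V ω) ≠ Y ω ∧ ang d (V ω) ∈ R ∧ t ≤ ‖V ω‖}).toReal)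
      atTop (𝓝 ((P {ω | Y ω = 1}).toReal *
          (μp (coneOf d ({x ∈ supSphere d | g x = -1} ∩ R))).toReal +
        (P {ω | Y ω = -1}).toReal * (μm (coneOf d ({x ∈ supSphere d | g x = 1} ∩ R))).toReal)) := by
  have hA : ∀ σ : ℝ, MeasurableSet ({x ∈ supSphere d | g x = σ} ∩ R) := fun σ =>
    (isClosed_supSphere.measurableSet.inter (hg (measurableSet_singleton σ))).inter hR
  refine ((hRVp.tendsto_mul_measure_smul_posPartCone hμp hVpos (hA _)
    (measure_coneOf_relBoundary_inter_eq_zero hgp hRp)).add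
    (hRVm.tendsto_mul_measure_smul_posPartCone hμm hVpos (hA _)
      (measure_coneOf_relBoundary_inter_eq_zero hgm hRm))).congr' ?_
  filter_upwards [eventually_gt_atTop 0] with t ht
  rw [measure_misclassified_eq hV hY hg hR hVpos hYpm hgpm hgang ht,
    ENNReal.toReal_add (measure_ne_top _ _) (measure_ne_top _ _), mul_add]

end Risk

lemma measure_coneOf_eq_zero_of_mixAngular_eq_zero {d : ℕ} {p : ℝ} (hp0 : 0 < p) (hp1 : p < 1)
    {μp μm : Measure (Fin d → ℝ)} {T : Set (Fin d → ℝ)} (hμp : μp (coneOf d T) ≠ ⊤)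
    (hμm : μm (coneOf d T) ≠ ⊤) (h : mixAngular d p μp μm T = 0) :
    μp (coneOf d T) = 0 ∧ μm (coneOf d T) = 0 := by
  obtain ⟨hp, hm⟩ := (add_eq_zero_iff_of_nonneg (by positivity)
    (mul_nonneg (sub_nonneg.2 hp1.le) ENNReal.toReal_nonneg)).1 h
  rw [mul_eq_zero, ENNReal.toReal_eq_zero_iff] at hp hm
  exact ⟨((hp.resolve_left hp0.ne').resolve_right hμp),
    ((hm.resolve_left (sub_ne_zero.2 hp1.ne')).resolve_right hμm)⟩

lemma toReal_measure_neg_one_eq_one_sub {Ω : Type*} [MeasurableSpace Ω] {P : Measure Ω}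
    [IsProbabilityMeasure P] {Y : Ω → ℝ} (hY : Measurable Y)
    (hYpm : ∀ᵐ ω ∂P, Y ω = 1 ∨ Y ω = -1) :
    (P {ω | Y ω = -1}).toReal = 1 - (P {ω | Y ω = 1}).toReal := by
  have hae : {ω | Y ω = -1} =ᵐ[P] {ω | Y ω = 1}ᶜ := by
    filter_upwards [hYpm] with ω hω
    change (Y ω = -1) = ¬Y ω = 1
    rcases hω with h | h <;> norm_num [h]
  rw [measure_congr hae]
  exact probReal_compl_eq_one_sub (hY (measurableSet_singleton 1))

theorem limit_classification_risk_general (d : ℕ)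
    {Ω : Type*} [MeasurableSpace Ω] (Pr : Measure Ω) [IsProbabilityMeasure Pr]
    (V : Ω → Fin d → ℝ) (Y : Ω → ℝ) (hV : Measurable V) (hY : Measurable Y)
    (hVpos : ∀ᵐ ω ∂Pr, ∀ j, 0 ≤ V ω j)
    (hYpm : ∀ᵐ ω ∂Pr, Y ω = 1 ∨ Y ω = -1)
    (p : ℝ) (hp : p = (Pr {ω | Y ω = 1}).toReal) (hp0 : 0 < p) (hp1 : p < 1)
    (μp μm : Measure (Fin d → ℝ))
    (hμpfin : ∀ B : Set (Fin d → ℝ), MeasurableSet B → BddAwayFromZero d B → μp B ≠ ⊤)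
    (hμmfin : ∀ B : Set (Fin d → ℝ), MeasurableSet B → BddAwayFromZero d B → μm B ≠ ⊤)
    (hμphom : ∀ l : ℝ, 0 < l → ∀ B : Set (Fin d → ℝ), MeasurableSet B →
      μp (l • B) = ENNReal.ofReal l⁻¹ * μp B)
    (hμmhom : ∀ l : ℝ, 0 < l → ∀ B : Set (Fin d → ℝ), MeasurableSet B →
      μm (l • B) = ENNReal.ofReal l⁻¹ * μm B)
    -- conditional regular variation
    (hRVp : ∀ B : Set (Fin d → ℝ), MeasurableSet B → BddAwayFromZero d B →
      μp (frontier B) = 0 →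
      Tendsto (fun t : ℝ =>
          t * ((Pr {ω | V ω ∈ t • B ∧ Y ω = 1}).toReal / (Pr {ω | Y ω = 1}).toReal))
        atTop (𝓝 (μp B).toReal))
    (hRVm : ∀ B : Set (Fin d → ℝ), MeasurableSet B → BddAwayFromZero d B →
      μm (frontier B) = 0 →
      Tendsto (fun t : ℝ =>
          t * ((Pr {ω | V ω ∈ t • B ∧ Y ω = -1}).toReal / (Pr {ω | Y ω = -1}).toReal))
        atTop (𝓝 (μm B).toReal))
    -- angular classifier
    (g : (Fin d → ℝ) → ℝ) (hg : Measurable g)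
    (hgpm : ∀ x ∈ Eorthant d, g x = 1 ∨ g x = -1)
    (hgang : ∀ x ∈ Eorthant d, g x = g (ang d x))
    (τ : ℝ)
    -- smoothness assumption (boundaries relative to the sphere)
    (hsm1 : mixAngular d p μp μm (relBoundary d (sphereTau d τ)) = 0)
    (hsm2 : mixAngular d p μp μm (relBoundary d {x ∈ supSphere d | g x = 1}) = 0)
    (hsm3 : mixAngular d p μp μm (relBoundary d {x ∈ supSphere d | g x = -1}) = 0) :
    -- (a)
    Tendsto (fun t : ℝ =>
        t * (Pr {ω | g (V ω) ≠ Y ω ∧ ang d (V ω) ∈ sphereTau d τ ∧ t ≤ ‖V ω‖}).toReal)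
      atTop (𝓝 (p * (μp (coneOf d ({x ∈ supSphere d | g x = -1} ∩ sphereTau d τ))).toReal
        + (1 - p) * (μm (coneOf d ({x ∈ supSphere d | g x = 1} ∩ sphereTau d τ))).toReal)) ∧
    -- (b)
    Tendsto (fun t : ℝ =>
        t * (Pr {ω | g (V ω) ≠ Y ω ∧ ang d (V ω) ∉ sphereTau d τ ∧ t ≤ ‖V ω‖}).toReal)
      atTop (𝓝 (p * (μp (coneOf d ({x ∈ supSphere d | g x = -1} \ sphereTau d τ))).toReal
        + (1 - p) * (μm (coneOf d ({x ∈ supSphere d | g x = 1} \ sphereTau d τ))).toReal)) ∧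
    -- (c)
    Tendsto (fun t : ℝ =>
        t * (Pr {ω | g (V ω) ≠ Y ω ∧ t ≤ ‖V ω‖}).toReal)
      atTop (𝓝 (p * (μp (coneOf d {x ∈ supSphere d | g x = -1})).toReal
        + (1 - p) * (μm (coneOf d {x ∈ supSphere d | g x = 1})).toReal)) := by
  have hμp : IsExponentMeasure d μp := ⟨hμpfin, hμphom⟩
  have hμm : IsExponentMeasure d μm := ⟨hμmfin, hμmhom⟩
  have hq : (Pr {ω | Y ω = -1}).toReal = 1 - p := hp ▸ toReal_measure_neg_one_eq_one_sub hY hYpm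
  have hnull : ∀ T, mixAngular d p μp μm (relBoundary d T) = 0 →
      μp (coneOf d (relBoundary d T)) = 0 ∧ μm (coneOf d (relBoundary d T)) = 0 := fun T =>
    have hT := (isClosed_relBoundary T).measurableSet
    measure_coneOf_eq_zero_of_mixAngular_eq_zero hp0 hp1 (hμp.measure_coneOf_ne_top hT)
      (hμm.measure_coneOf_ne_top hT)
  have risk : ∀ R, MeasurableSet R → mixAngular d p μp μm (relBoundary d R) = 0 →
      Tendsto (fun t : ℝ => t * (Pr {ω | g (V ω) ≠ Y ω ∧ ang d (V ω) ∈ R ∧ t ≤ ‖V ω‖}).toReal)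
        atTop (𝓝 (p * (μp (coneOf d ({x ∈ supSphere d | g x = -1} ∩ R))).toReal
          + (1 - p) * (μm (coneOf d ({x ∈ supSphere d | g x = 1} ∩ R))).toReal)) := by
    intro R hR hRb
    rw [← hq, hp]
    exact tendsto_mul_measure_misclassified hV hY hVpos hYpm hμp hμm hRVp hRVm hg hgpm hgang hR
      (hnull _ hsm3).1 (hnull _ hRb).1 (hnull _ hsm2).2 (hnull _ hRb).2
  refine ⟨risk _ (measurableSet_sphereTau τ) hsm1,
    risk (sphereTau d τ)ᶜ (measurableSet_sphereTau τ).compl (by rwa [relBoundary_compl]), ?_⟩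
  simpa using risk Set.univ MeasurableSet.univ (by simp [relBoundary_univ, mixAngular, coneOf])

/-- Limits of the (unconditional) classification risks above level `t` for an angular
classifier `g`, under conditional regular variation and the smoothness assumption:
(a) `t·P(g(V) ≠ Y, θ(V) ∈ S_τ, ‖V‖ ≥ t) → p·Φ₊(S_g⁻ ∩ S_τ) + (1−p)·Φ₋(S_g⁺ ∩ S_τ)`,
(b) `t·P(g(V) ≠ Y, θ(V) ∉ S_τ, ‖V‖ ≥ t) → p·Φ₊(S_g⁻ \ S_τ) + (1−p)·Φ₋(S_g⁺ \ S_τ)`,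
(c) `t·P(g(V) ≠ Y, ‖V‖ ≥ t) → p·Φ₊(S_g⁻) + (1−p)·Φ₋(S_g⁺)`. -/
theorem limit_classification_risk (d : ℕ) (hd : 1 ≤ d)
    {Ω : Type*} [MeasurableSpace Ω] (Pr : Measure Ω) [IsProbabilityMeasure Pr]
    (V : Ω → Fin d → ℝ) (Y : Ω → ℝ) (hV : Measurable V) (hY : Measurable Y)
    (hVpos : ∀ᵐ ω ∂Pr, ∀ j, 0 ≤ V ω j)
    (hYpm : ∀ᵐ ω ∂Pr, Y ω = 1 ∨ Y ω = -1)
    (p : ℝ) (hp : p = (Pr {ω | Y ω = 1}).toReal) (hp0 : 0 < p) (hp1 : p < 1)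
    (μp μm : Measure (Fin d → ℝ)) (hμp0 : μp ≠ 0) (hμm0 : μm ≠ 0)
    (hμpfin : ∀ B : Set (Fin d → ℝ), MeasurableSet B → BddAwayFromZero d B → μp B ≠ ⊤)
    (hμmfin : ∀ B : Set (Fin d → ℝ), MeasurableSet B → BddAwayFromZero d B → μm B ≠ ⊤)
    (hμphom : ∀ l : ℝ, 0 < l → ∀ B : Set (Fin d → ℝ), MeasurableSet B →
      μp (l • B) = ENNReal.ofReal l⁻¹ * μp B)
    (hμmhom : ∀ l : ℝ, 0 < l → ∀ B : Set (Fin d → ℝ), MeasurableSet B →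
      μm (l • B) = ENNReal.ofReal l⁻¹ * μm B)
    -- conditional regular variation
    (hRVp : ∀ B : Set (Fin d → ℝ), MeasurableSet B → BddAwayFromZero d B →
      μp (frontier B) = 0 →
      Tendsto (fun t : ℝ =>
          t * ((Pr {ω | V ω ∈ t • B ∧ Y ω = 1}).toReal / (Pr {ω | Y ω = 1}).toReal))
        atTop (𝓝 (μp B).toReal))
    (hRVm : ∀ B : Set (Fin d → ℝ), MeasurableSet B → BddAwayFromZero d B →
      μm (frontier B) = 0 →
      Tendsto (fun t : ℝ =>
          t * ((Pr {ω | V ω ∈ t • B ∧ Y ω = -1}).toReal / (Pr {ω | Y ω = -1}).toReal))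
        atTop (𝓝 (μm B).toReal))
    -- angular classifier
    (g : (Fin d → ℝ) → ℝ) (hg : Measurable g)
    (hgpm : ∀ x ∈ Eorthant d, g x = 1 ∨ g x = -1)
    (hgang : ∀ x ∈ Eorthant d, g x = g (ang d x))
    (τ : ℝ) (hτ0 : 0 < τ) (hτ1 : τ < 1)
    -- smoothness assumption (boundaries relative to the sphere)
    (hsm1 : mixAngular d p μp μm (relBoundary d (sphereTau d τ)) = 0)
    (hsm2 : mixAngular d p μp μm (relBoundary d {x ∈ supSphere d | g x = 1}) = 0)
    (hsm3 : mixAngular d p μp μm (relBoundary d {x ∈ supSphere d | g x = -1}) = 0) :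
    -- (a)
    Tendsto (fun t : ℝ =>
        t * (Pr {ω | g (V ω) ≠ Y ω ∧ ang d (V ω) ∈ sphereTau d τ ∧ t ≤ ‖V ω‖}).toReal)
      atTop (𝓝 (p * (μp (coneOf d ({x ∈ supSphere d | g x = -1} ∩ sphereTau d τ))).toReal
        + (1 - p) * (μm (coneOf d ({x ∈ supSphere d | g x = 1} ∩ sphereTau d τ))).toReal)) ∧
    -- (b)
    Tendsto (fun t : ℝ =>
        t * (Pr {ω | g (V ω) ≠ Y ω ∧ ang d (V ω) ∉ sphereTau d τ ∧ t ≤ ‖V ω‖}).toReal)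
      atTop (𝓝 (p * (μp (coneOf d ({x ∈ supSphere d | g x = -1} \ sphereTau d τ))).toReal
        + (1 - p) * (μm (coneOf d ({x ∈ supSphere d | g x = 1} \ sphereTau d τ))).toReal)) ∧
    -- (c)
    Tendsto (fun t : ℝ =>
        t * (Pr {ω | g (V ω) ≠ Y ω ∧ t ≤ ‖V ω‖}).toReal)
      atTop (𝓝 (p * (μp (coneOf d {x ∈ supSphere d | g x = -1})).toReal
        + (1 - p) * (μm (coneOf d {x ∈ supSphere d | g x = 1})).toReal)) :=
  limit_classification_risk_general d Pr V Y hV hY hVpos hYpm p hp hp0 hp1 μp μm hμpfin hμmfin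
    hμphom hμmhom hRVp hRVm g hg hgpm hgang τ hsm1 hsm2 hsm3
end
end

section
/- Let ν, π and μ be measures on a measurable space, and let Γ⁻, Γ⁺, G and C be measurable sets with Γ⁻ ⊆ G ⊆ Γ⁺ and Γ⁻ ⊆ C ⊆ Γ⁺, and suppose ν(Γ⁺), π(Γ⁺) and μ(Γ⁺) are all finite. Then |ν(G) − μ(C)| ≤ max_{B ∈ {Γ⁻, Γ⁺}} |π(B) − μ(B)| + max_{B ∈ {Γ⁻, Γ⁺}} |ν(B) − π(B)| + μ(Γ⁺ \ Γ⁻). -/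
open MeasureTheory Set

/-! If `x` is framed by `a ≤ x ≤ b` and `y` by `c ≤ y ≤ d`, then `x - y` deviates from zero by at
most the larger endpoint discrepancy plus the width `d - c` of the frame of `y`. Apply this to
`x = ν(G)`, `y = μ(C)` framed by `Γ⁻ ⊆ · ⊆ Γ⁺`, split the endpoint discrepancies `ν(B) - μ(B)`
through `π(B)` by the triangle inequality for the sup-metric on `ℝ × ℝ`, and bound the width
`μ(Γ⁺) - μ(Γ⁻)` by `μ(Γ⁺ \ Γ⁻)`. -/

theorem abs_sub_le_max_abs_sub_add_of_mem_Icc {α : Type*} [AddCommGroup α] [LinearOrder α]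
    [IsOrderedAddMonoid α] {a b c d x y : α} (hx : x ∈ Icc a b) (hy : y ∈ Icc c d) :
    |x - y| ≤ max |a - c| |b - d| + (d - c) := by
  rw [abs_sub_le_iff]
  constructor
  · calc x - y ≤ b - c := sub_le_sub hx.2 hy.1
      _ = (b - d) + (d - c) := by abel
      _ ≤ max |a - c| |b - d| + (d - c) := by gcongr; exact (le_abs_self _).trans (le_max_right _ _)
  · calc y - x ≤ d - a := sub_le_sub hy.2 hx.1
      _ = (c - a) + (d - c) := by abel
      _ ≤ max |a - c| |b - d| + (d - c) := by
        gcongr; exact ((le_abs_self _).trans_eq (abs_sub_comm _ _)).trans (le_max_left _ _)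

theorem max_abs_sub_le_max_abs_sub_add_max_abs_sub (a₁ a₂ b₁ b₂ c₁ c₂ : ℝ) :
    max |a₁ - c₁| |a₂ - c₂| ≤ max |b₁ - c₁| |b₂ - c₂| + max |a₁ - b₁| |a₂ - b₂| := by
  simpa only [Prod.dist_eq, Real.dist_eq] using
    (dist_triangle (a₁, a₂) (b₁, b₂) (c₁, c₂)).trans_eq (add_comm _ _)

theorem measureReal_sub_le_measureReal_sdiff {α : Type*} [MeasurableSpace α] (μ : Measure α)
    (s t : Set α) (ht : μ t ≠ ⊤) : μ.real s - μ.real t ≤ μ.real (s \ t) := by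
  have : μ.real s ≤ μ.real t + μ.real (s \ t) :=
    calc μ.real s ≤ μ.real (t ∪ s) := measureReal_le_measureReal_union_right ht
      _ = μ.real (t ∪ s \ t) := by rw [union_sdiff_self]
      _ ≤ μ.real t + μ.real (s \ t) := measureReal_union_le _ _
  linarith

theorem framing_decomposition_general {Ω : Type*} [MeasurableSpace Ω]
    (ν π μ : Measure Ω) (Γm Γp G C : Set Ω)
    (hmG : Γm ⊆ G) (hGp : G ⊆ Γp) (hmC : Γm ⊆ C) (hCp : C ⊆ Γp)
    (hν : ν Γp ≠ ⊤) (hμ : μ Γp ≠ ⊤) :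
    |(ν G).toReal - (μ C).toReal| ≤
      max |(π Γm).toReal - (μ Γm).toReal| |(π Γp).toReal - (μ Γp).toReal|
      + max |(ν Γm).toReal - (π Γm).toReal| |(ν Γp).toReal - (π Γp).toReal|
      + (μ (Γp \ Γm)).toReal := by
  have hνG : ν G ≠ ⊤ := measure_ne_top_of_subset hGp hν
  have hμC : μ C ≠ ⊤ := measure_ne_top_of_subset hCp hμ
  have hμm : μ Γm ≠ ⊤ := measure_ne_top_of_subset hmC hμC
  calc |(ν G).toReal - (μ C).toReal|
      ≤ max |(ν Γm).toReal - (μ Γm).toReal| |(ν Γp).toReal - (μ Γp).toReal|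
          + ((μ Γp).toReal - (μ Γm).toReal) :=
        abs_sub_le_max_abs_sub_add_of_mem_Icc
          ⟨measureReal_mono hmG hνG, measureReal_mono hGp hν⟩
          ⟨measureReal_mono hmC hμC, measureReal_mono hCp hμ⟩
    _ ≤ _ := add_le_add (max_abs_sub_le_max_abs_sub_add_max_abs_sub _ _ _ _ _ _)
        (measureReal_sub_le_measureReal_sdiff μ Γp Γm hμm)

/-- Generic bias / stochastic-error / framing-gap decomposition.
Let `ν, π, μ` be measures, and `Γ⁻ ⊆ G ⊆ Γ⁺`, `Γ⁻ ⊆ C ⊆ Γ⁺` measurable sets with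
`ν(Γ⁺), π(Γ⁺), μ(Γ⁺)` finite.  Then
`|ν(G) − μ(C)| ≤ max_{B ∈ {Γ⁻,Γ⁺}} |π(B) − μ(B)| + max_{B ∈ {Γ⁻,Γ⁺}} |ν(B) − π(B)|
 + μ(Γ⁺ \ Γ⁻)`. -/
theorem framing_decomposition {Ω : Type*} [MeasurableSpace Ω]
    (ν π μ : Measure Ω) (Γm Γp G C : Set Ω)
    (hΓm : MeasurableSet Γm) (hΓp : MeasurableSet Γp)
    (hG : MeasurableSet G) (hC : MeasurableSet C)
    (hmG : Γm ⊆ G) (hGp : G ⊆ Γp) (hmC : Γm ⊆ C) (hCp : C ⊆ Γp)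
    (hν : ν Γp ≠ ⊤) (hπ : π Γp ≠ ⊤) (hμ : μ Γp ≠ ⊤) :
    |(ν G).toReal - (μ C).toReal| ≤
      max |(π Γm).toReal - (μ Γm).toReal| |(π Γp).toReal - (μ Γp).toReal|
      + max |(ν Γm).toReal - (π Γm).toReal| |(ν Γp).toReal - (π Γp).toReal|
      + (μ (Γp \ Γm)).toReal :=
  framing_decomposition_general ν π μ Γm Γp G C hmG hGp hmC hCp hν hμ
end

section
/- Let d ≥ 1, let Φ be a finite Borel measure on S = {x ∈ [0,∞)^d : max_j x_j = 1} with Φ(S) > 0, and let μ be the polar-defined measure on E = [0,∞)^d \ {0}, μ(B) = ∫_0^∞ Φ({θ ∈ S : rθ ∈ B}) r^{−2} dr. Let D ⊆ [1,∞) × S be a Borel set whose slices D_r = {θ ∈ S : (r, θ) ∈ D} satisfy Φ(D_r) ≤ a·r for all r ≥ 1, where 0 < a ≤ Φ(S). Then μ({x ∈ E : ‖x‖ ≥ 1, (‖x‖, x/‖x‖) ∈ D}) ≤ a·(1 + log(Φ(S)/a)). -/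
open MeasureTheory ENNReal

noncomputable section

/-- The polar-defined measure associated with an angular measure `Φ` on the sphere:
`μ(B) = ∫_0^∞ Φ({θ ∈ S : rθ ∈ B}) r⁻² dr`. -/
def polarMeasure (d : ℕ) (Φ : Measure (Fin d → ℝ)) (B : Set (Fin d → ℝ)) : ℝ≥0∞ :=
  ∫⁻ r in Set.Ioi (0 : ℝ), Φ {θ | θ ∈ supSphere d ∧ r • θ ∈ B} / ENNReal.ofReal (r ^ 2)

open Set

/-!
At radius `r` the angular slice of the set is contained in `D_r`, and is empty for `r < 1`, so
with `M = Φ(S)` its `Φ`-measure is at most `min (a r) M` and `μ` of the set is at most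
`∫_1^∞ min (a r) M / r² dr`. Splitting at `M / a`, the two pieces are
`∫_1^{M/a} a / r dr = a log (M / a)` and `∫_{M/a}^∞ M / r² dr = a`.
-/

lemma lintegral_Icc_ofReal_div {a b c : ℝ} (ha : 0 ≤ a) (hb : 0 < b) (hbc : b ≤ c) :
    ∫⁻ r in Icc b c, ENNReal.ofReal (a / r) = ENNReal.ofReal (a * Real.log (c / b)) := by
  have hpos : ∀ r ∈ Icc b c, 0 < r := fun r hr => hb.trans_le hr.1
  have hint : IntegrableOn (fun r => a / r) (Icc b c) :=
    (continuousOn_const.div continuousOn_id fun r hr => (hpos r hr).ne').integrableOn_Icc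
  have h0 : (0 : ℝ) ∉ uIcc b c := by
    rw [uIcc_of_le hbc]
    exact fun h => (hpos 0 h).false
  rw [← ofReal_integral_eq_lintegral_ofReal hint
    (ae_restrict_of_forall_mem measurableSet_Icc fun r hr => div_nonneg ha (hpos r hr).le),
    integral_Icc_eq_integral_Ioc, ← intervalIntegral.integral_of_le hbc]
  simp_rw [div_eq_mul_inv]
  rw [intervalIntegral.integral_const_mul, integral_inv h0, div_eq_mul_inv]

lemma lintegral_Ioi_ofReal_div_sq {M c : ℝ} (hM : 0 ≤ M) (hc : 0 < c) :
    ∫⁻ r in Ioi c, ENNReal.ofReal (M / r ^ 2) = ENNReal.ofReal (M / c) := by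
  have hrpow : EqOn (fun r : ℝ => M / r ^ 2) (fun r => M * r ^ (-2 : ℝ)) (Ioi c) := by
    intro r hr
    simp only [Real.rpow_neg (hc.trans hr).le, div_eq_mul_inv]
    norm_cast
  have hint : IntegrableOn (fun r : ℝ => M / r ^ 2) (Ioi c) :=
    IntegrableOn.congr_fun ((integrableOn_Ioi_rpow_of_lt (by norm_num) hc).const_mul M)
      hrpow.symm measurableSet_Ioi
  rw [← ofReal_integral_eq_lintegral_ofReal hint
    (ae_restrict_of_forall_mem measurableSet_Ioi fun r _ => by positivity),
    setIntegral_congr_fun measurableSet_Ioi hrpow, integral_const_mul,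
    integral_Ioi_rpow_of_lt (by norm_num) hc]
  norm_num [div_eq_mul_inv, Real.rpow_neg_one]

lemma lintegral_Ici_one_min_mul_div_sq_le {a M : ℝ} (ha : 0 < a) (haM : a ≤ M) :
    ∫⁻ r in Ici 1, ENNReal.ofReal (min (a * r) M / r ^ 2)
      ≤ ENNReal.ofReal (a * (1 + Real.log (M / a))) := by
  set c := M / a
  have hc : 1 ≤ c := (one_le_div ha).2 haM
  have hcover : Ici (1 : ℝ) ⊆ Icc 1 c ∪ Ioi c := fun r hr => by
    rcases le_or_gt r c with h | h
    exacts [Or.inl ⟨hr, h⟩, Or.inr h]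
  have hsmall : ∀ r ∈ Icc 1 c, ENNReal.ofReal (min (a * r) M / r ^ 2) ≤ ENNReal.ofReal (a / r) :=
    fun r hr => ENNReal.ofReal_le_ofReal <| by
      have hr0 : 0 < r := zero_lt_one.trans_le hr.1
      calc min (a * r) M / r ^ 2 ≤ a * r / r ^ 2 := by gcongr; exact min_le_left _ _
        _ = a / r := by field_simp
  have hlarge : ∀ r ∈ Ioi c, ENNReal.ofReal (min (a * r) M / r ^ 2) ≤ ENNReal.ofReal (M / r ^ 2) :=
    fun r _ => ENNReal.ofReal_le_ofReal <| by gcongr; exact min_le_right _ _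
  calc ∫⁻ r in Ici 1, ENNReal.ofReal (min (a * r) M / r ^ 2)
      ≤ ∫⁻ r in Icc 1 c ∪ Ioi c, ENNReal.ofReal (min (a * r) M / r ^ 2) :=
        lintegral_mono_set hcover
    _ ≤ (∫⁻ r in Icc 1 c, ENNReal.ofReal (a / r)) + ∫⁻ r in Ioi c, ENNReal.ofReal (M / r ^ 2) :=
        (lintegral_union_le _ _ _).trans <|
          add_le_add (setLIntegral_mono (by fun_prop) hsmall) (setLIntegral_mono (by fun_prop) hlarge)
    _ = ENNReal.ofReal (a * Real.log c) + ENNReal.ofReal a := by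
        rw [lintegral_Icc_ofReal_div ha.le zero_lt_one hc, div_one,
          lintegral_Ioi_ofReal_div_sq (ha.le.trans haM) (zero_lt_one.trans_le hc), div_div_cancel₀
            (ha.trans_le haM).ne']
    _ = ENNReal.ofReal (a * (1 + Real.log c)) := by
        rw [← ENNReal.ofReal_add (mul_nonneg ha.le (Real.log_nonneg hc)) ha.le]
        congr 1
        ring

lemma norm_smul_of_mem_supSphere {d : ℕ} {r : ℝ} {θ : Fin d → ℝ} (hr : 0 ≤ r)
    (hθ : θ ∈ supSphere d) : ‖r • θ‖ = r := by
  rw [norm_smul, hθ.2, Real.norm_of_nonneg hr, mul_one]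

lemma measure_slice_div_sq_le {d : ℕ} {Φ : Measure (Fin d → ℝ)} {D : Set (ℝ × (Fin d → ℝ))}
    {a : ℝ} (hslice : ∀ r : ℝ, 1 ≤ r →
      Φ {θ | θ ∈ supSphere d ∧ (r, θ) ∈ D} ≤ ENNReal.ofReal (a * r))
    (hS : Φ (supSphere d) ≠ ∞) {r : ℝ} (hr : 0 < r) :
    Φ {θ | θ ∈ supSphere d ∧ r • θ ∈ {x | x ∈ Eorthant d ∧ 1 ≤ ‖x‖ ∧ (‖x‖, ‖x‖⁻¹ • x) ∈ D}}
        / ENNReal.ofReal (r ^ 2)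
      ≤ (Ici 1).indicator
          (fun r => ENNReal.ofReal (min (a * r) (Φ (supSphere d)).toReal / r ^ 2)) r := by
  have hmem : ∀ θ ∈ {θ | θ ∈ supSphere d ∧
      r • θ ∈ {x | x ∈ Eorthant d ∧ 1 ≤ ‖x‖ ∧ (‖x‖, ‖x‖⁻¹ • x) ∈ D}},
      1 ≤ r ∧ θ ∈ supSphere d ∧ (r, θ) ∈ D := by
    rintro θ ⟨hθ, -, hr1, hD⟩
    rw [norm_smul_of_mem_supSphere hr.le hθ, smul_smul, inv_mul_cancel₀ hr.ne', one_smul] at *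
    exact ⟨hr1, hθ, hD⟩
  by_cases hr1 : 1 ≤ r
  · rw [indicator_of_mem (mem_Ici.2 hr1), ENNReal.ofReal_div_of_pos (by positivity),
      ENNReal.ofReal_min, ENNReal.ofReal_toReal hS]
    gcongr
    exact le_min ((measure_mono fun θ hθ => (hmem θ hθ).2).trans (hslice r hr1))
      (measure_mono fun θ hθ => (hmem θ hθ).2.1)
  · rw [eq_empty_of_forall_notMem fun θ hθ => hr1 (hmem θ hθ).1, measure_empty, ENNReal.zero_div]
    exact zero_le

theorem polarMeasure_slice_bound_general (d : ℕ)
    (Φ : Measure (Fin d → ℝ))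
    (D : Set (ℝ × (Fin d → ℝ)))
    (a : ℝ) (ha : 0 < a) (haS : a ≤ (Φ (supSphere d)).toReal)
    (hslice : ∀ r : ℝ, 1 ≤ r →
      Φ {θ | θ ∈ supSphere d ∧ (r, θ) ∈ D} ≤ ENNReal.ofReal (a * r)) :
    polarMeasure d Φ {x | x ∈ Eorthant d ∧ 1 ≤ ‖x‖ ∧ (‖x‖, ‖x‖⁻¹ • x) ∈ D}
      ≤ ENNReal.ofReal (a * (1 + Real.log ((Φ (supSphere d)).toReal / a))) := by
  have hS : Φ (supSphere d) ≠ ∞ := fun h => by simp [h] at haS; linarith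
  set M := (Φ (supSphere d)).toReal
  calc polarMeasure d Φ {x | x ∈ Eorthant d ∧ 1 ≤ ‖x‖ ∧ (‖x‖, ‖x‖⁻¹ • x) ∈ D}
      ≤ ∫⁻ r in Ioi 0, (Ici 1).indicator (fun r => ENNReal.ofReal (min (a * r) M / r ^ 2)) r :=
        setLIntegral_mono ((by fun_prop : Measurable _).indicator measurableSet_Ici)
          fun r hr => measure_slice_div_sq_le hslice hS hr
    _ = ∫⁻ r in Ici 1, ENNReal.ofReal (min (a * r) M / r ^ 2) := by
        rw [lintegral_indicator measurableSet_Ici, Measure.restrict_restrict measurableSet_Ici,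
          inter_eq_left.2 (Ici_subset_Ioi.2 zero_lt_one)]
    _ ≤ ENNReal.ofReal (a * (1 + Real.log (M / a))) :=
        lintegral_Ici_one_min_mul_div_sq_le ha haS

/-- Framing-gap bound: if `D ⊆ [1,∞) × S` is a Borel set whose slices
`D_r = {θ ∈ S : (r,θ) ∈ D}` satisfy `Φ(D_r) ≤ a·r` for all `r ≥ 1`, with
`0 < a ≤ Φ(S)`, then
`μ({x ∈ E : ‖x‖ ≥ 1, (‖x‖, x/‖x‖) ∈ D}) ≤ a·(1 + log(Φ(S)/a))`. -/
theorem polarMeasure_slice_bound (d : ℕ) (hd : 1 ≤ d)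
    (Φ : Measure (Fin d → ℝ)) [IsFiniteMeasure Φ] (hΦpos : 0 < Φ (supSphere d))
    (D : Set (ℝ × (Fin d → ℝ))) (hD : MeasurableSet D)
    (hDsub : D ⊆ Set.Ici (1 : ℝ) ×ˢ supSphere d)
    (a : ℝ) (ha : 0 < a) (haS : a ≤ (Φ (supSphere d)).toReal)
    (hslice : ∀ r : ℝ, 1 ≤ r →
      Φ {θ | θ ∈ supSphere d ∧ (r, θ) ∈ D} ≤ ENNReal.ofReal (a * r)) :
    polarMeasure d Φ {x | x ∈ Eorthant d ∧ 1 ≤ ‖x‖ ∧ (‖x‖, ‖x‖⁻¹ • x) ∈ D}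
      ≤ ENNReal.ofReal (a * (1 + Real.log ((Φ (supSphere d)).toReal / a))) :=
  polarMeasure_slice_bound_general d Φ D a ha haS hslice
end
end

section
/- Let n, k, Δ, x be real numbers with n > 0, k > 0, Δ > 0, x ≥ 1, kΔ ≥ 2 and 3kΔx ≤ n. Then for both σ = +1 and σ = −1, the denominator n/x + σkΔ + 1 is positive and |(n+1)/(n/x + σkΔ + 1) − x| ≤ (3/2)·(kΔ/n)·x². -/
/-!
Writing `c = σkΔ + 1`, one has `(n + 1) / (n/x + c) - x = (1 - xc) / (n/x + c)`, so it suffices to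
bound `|1 - xc|` by `(3/2)(kΔ/n)x² (n/x + c) = (3/2)kΔx + (3/2)(kΔ/n)x²c`.
For `σ = 1` the second summand is nonnegative and `x(kΔ + 1) ≤ (3/2)kΔx` as `kΔ ≥ 2`.
For `σ = -1` it is at least `-(1/2)x(kΔ - 1)` because `kΔx/n ≤ 1/3`, which leaves room for
`|1 - x + kΔx| ≤ kΔx`.
-/

section RankPerturbation

variable {n x D s : ℝ}

lemma div_add_add_one_sub_self (hx : x ≠ 0) (hden : n / x + s + 1 ≠ 0) :
    (n + 1) / (n / x + s + 1) - x = (1 - x * (s + 1)) / (n / x + s + 1) := by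
  rw [eq_div_iff hden, sub_mul, div_mul_cancel₀ _ hden]
  field_simp
  ring

lemma abs_div_add_add_one_sub_self_le {B : ℝ} (hx : x ≠ 0) (hden : 0 < n / x + s + 1)
    (hnum : |1 - x * (s + 1)| ≤ B * (n / x + s + 1)) :
    |(n + 1) / (n / x + s + 1) - x| ≤ B := by
  rwa [div_add_add_one_sub_self hx hden.ne', abs_div, abs_of_pos hden, div_le_iff₀ hden]

lemma abs_one_sub_mul_add_one_le (hn : 0 < n) (hx : 1 ≤ x) (hD : 2 ≤ D) :
    |1 - x * (D + 1)| ≤ 3 / 2 * (D / n) * x ^ 2 * (n / x + D + 1) := by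
  have hx0 : 0 < x := by linarith
  have hexpand : 3 / 2 * (D / n) * x ^ 2 * (n / x + D + 1)
      = 3 / 2 * D * x + 3 / 2 * (D / n) * x ^ 2 * (D + 1) := by
    field_simp
    ring
  have htail : 0 ≤ 3 / 2 * (D / n) * x ^ 2 * (D + 1) := by positivity
  rw [hexpand, abs_of_nonpos (by nlinarith)]
  nlinarith

lemma abs_one_sub_mul_one_sub_le (hn : 0 < n) (hx : 1 ≤ x) (hD : 1 ≤ D)
    (hnx : 3 * D * x ≤ n) :
    |1 - x * (-D + 1)| ≤ 3 / 2 * (D / n) * x ^ 2 * (n / x + -D + 1) := by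
  have hx0 : 0 < x := by linarith
  have hratio : D / n * x ≤ 1 / 3 := by
    rw [div_mul_eq_mul_div, div_le_iff₀ hn]; linarith
  have hexpand : 3 / 2 * (D / n) * x ^ 2 * (n / x + -D + 1)
      = 3 / 2 * D * x - 3 / 2 * (D / n * x) * (x * (D - 1)) := by
    field_simp
    ring
  have htail : D / n * x * (x * (D - 1)) ≤ 1 / 3 * (x * (D - 1)) :=
    mul_le_mul_of_nonneg_right hratio (by nlinarith)
  rw [hexpand, abs_of_nonneg (by nlinarith)]
  nlinarith

end RankPerturbation

theorem rank_perturbation_estimate_general (n k Δ x : ℝ)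
    (hx : 1 ≤ x)
    (hkΔ : 2 ≤ k * Δ) (h3 : 3 * (k * Δ) * x ≤ n) :
    ∀ σ : ℝ, (σ = 1 ∨ σ = -1) →
      0 < n / x + σ * (k * Δ) + 1 ∧
      |(n + 1) / (n / x + σ * (k * Δ) + 1) - x| ≤ 3 / 2 * (k * Δ / n) * x ^ 2 := by
  intro σ hσ
  have hx0 : 0 < x := by linarith
  have hn : 0 < n := by nlinarith
  have hnx : 3 * (k * Δ) ≤ n / x := by rw [le_div_iff₀ hx0]; linarith
  rcases hσ with rfl | rfl
  · rw [one_mul]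
    have hden : 0 < n / x + k * Δ + 1 := by positivity
    exact ⟨hden, abs_div_add_add_one_sub_self_le hx0.ne' hden
      (abs_one_sub_mul_add_one_le hn hx hkΔ)⟩
  · rw [neg_one_mul]
    have hden : 0 < n / x + -(k * Δ) + 1 := by linarith
    exact ⟨hden, abs_div_add_add_one_sub_self_le hx0.ne' hden
      (abs_one_sub_mul_one_sub_le hn hx (by linarith) h3)⟩

/-- Deterministic perturbation estimate at the heart of the angular-framing step.
Let `n, k, Δ, x` be real numbers with `n > 0`, `k > 0`, `Δ > 0`, `x ≥ 1`, `kΔ ≥ 2`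
and `3kΔx ≤ n`.  Then for both `σ = +1` and `σ = −1`, the denominator
`n/x + σkΔ + 1` is positive and
`|(n+1)/(n/x + σkΔ + 1) − x| ≤ (3/2)·(kΔ/n)·x²`. -/
theorem rank_perturbation_estimate (n k Δ x : ℝ)
    (hn : 0 < n) (hk : 0 < k) (hΔ : 0 < Δ) (hx : 1 ≤ x)
    (hkΔ : 2 ≤ k * Δ) (h3 : 3 * (k * Δ) * x ≤ n) :
    ∀ σ : ℝ, (σ = 1 ∨ σ = -1) →
      0 < n / x + σ * (k * Δ) + 1 ∧
      |(n + 1) / (n / x + σ * (k * Δ) + 1) - x| ≤ 3 / 2 * (k * Δ / n) * x ^ 2 :=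
  rank_perturbation_estimate_general n k Δ x hx hkΔ h3
end

section
/- Let d ≥ 1. On a probability space, let R be a random variable with P(R > t) = 1/t for all t ≥ 1 and R ≥ 1 almost surely (unit-Pareto), and let Θ_j be a random variable with 0 ≤ Θ_j ≤ 1 almost surely and E[Θ_j] = 1/d, independent of R. Then for every real x ≥ 1, P(R·Θ_j > x) = 1/(d·x). Consequently, if X_j = R·Θ_j has cdf F_j, then 1/(1 − F_j(u)) = d·u for all u ≥ 1. -/
open MeasureTheory ProbabilityTheory ENNReal Set

/-!
Conditioning on `Θ = θ` (independence and Fubini) gives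
`P(RΘ > x) = ∫ P(R > x/θ) dP_Θ(θ) = ∫ θ/x dP_Θ(θ) = E[Θ]/x`, where the Pareto tail
applies because `θ ≤ 1 ≤ x`. The cdf identity follows by passing to the complement.
-/

lemma ProbabilityTheory.IndepFun.measure_preimage_eq_lintegral
    {Ω α β : Type*} [MeasurableSpace Ω] [MeasurableSpace α] [MeasurableSpace β]
    {P : Measure Ω} [IsFiniteMeasure P] {X : Ω → α} {Y : Ω → β}
    (hXY : IndepFun X Y P) (hX : Measurable X) (hY : Measurable Y)
    {S : Set (α × β)} (hS : MeasurableSet S) :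
    P ((fun ω ↦ (X ω, Y ω)) ⁻¹' S) = ∫⁻ y, P.map X {x | (x, y) ∈ S} ∂P.map Y := by
  rw [← Measure.map_apply (hX.prodMk hY) hS,
    (indepFun_iff_map_prod_eq_prod_map_map hX.aemeasurable hY.aemeasurable).mp hXY,
    Measure.prod_apply_symm hS]
  rfl

lemma measure_lt_mul_eq_ofReal_div {μ : Measure ℝ}
    (hμ : ∀ t : ℝ, 1 ≤ t → μ (Ioi t) = ENNReal.ofReal (1 / t))
    {x θ : ℝ} (hx : 0 < x) (hθ₀ : 0 ≤ θ) (hθx : θ ≤ x) :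
    μ {r | x < r * θ} = ENNReal.ofReal (θ / x) := by
  rcases hθ₀.eq_or_lt with rfl | hθ
  · simp [hx.not_gt]
  · have hset : {r : ℝ | x < r * θ} = Ioi (x / θ) := by
      ext r
      simp [div_lt_iff₀ hθ]
    rw [hset, hμ _ ((one_le_div hθ).mpr hθx), one_div_div]

lemma measure_lt_mul_eq_ofReal_integral_div {Ω : Type*} [MeasurableSpace Ω]
    {P : Measure Ω} [IsFiniteMeasure P] {R Θ : Ω → ℝ}
    (hR : Measurable R) (hΘ : Measurable Θ) (hindep : IndepFun R Θ P)
    (hPareto : ∀ t : ℝ, 1 ≤ t → P {ω | t < R ω} = ENNReal.ofReal (1 / t))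
    (hΘ01 : ∀ᵐ ω ∂P, Θ ω ∈ Icc (0 : ℝ) 1) {x : ℝ} (hx : 1 ≤ x) :
    P {ω | x < R ω * Θ ω} = ENNReal.ofReal ((∫ ω, Θ ω ∂P) / x) := by
  have hx₀ : 0 < x := one_pos.trans_le hx
  have hlaw : ∀ t : ℝ, 1 ≤ t → P.map R (Ioi t) = ENNReal.ofReal (1 / t) := fun t ht ↦ by
    rw [Measure.map_apply hR measurableSet_Ioi]
    exact hPareto t ht
  have hcond : ∀ᵐ θ ∂P.map Θ,
      P.map R {r | x < r * θ} = ENNReal.ofReal θ * (ENNReal.ofReal x)⁻¹ := by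
    filter_upwards [(ae_map_iff hΘ.aemeasurable measurableSet_Icc).mpr hΘ01] with θ hθ
    rw [measure_lt_mul_eq_ofReal_div hlaw hx₀ hθ.1 (hθ.2.trans hx), ofReal_div_of_pos hx₀,
      div_eq_mul_inv]
  have hint : Integrable Θ P := by
    refine .of_bound hΘ.aestronglyMeasurable 1 ?_
    filter_upwards [hΘ01] with ω hω
    exact abs_le.mpr ⟨by linarith [hω.1], hω.2⟩
  have hmean : ∫⁻ θ, ENNReal.ofReal θ ∂P.map Θ = ENNReal.ofReal (∫ ω, Θ ω ∂P) := by
    rw [lintegral_map ENNReal.measurable_ofReal hΘ, ofReal_integral_eq_lintegral_ofReal hint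
      (hΘ01.mono fun _ h ↦ h.1)]
  have hS : MeasurableSet {p : ℝ × ℝ | x < p.1 * p.2} :=
    measurableSet_lt measurable_const (measurable_fst.mul measurable_snd)
  rw [ofReal_div_of_pos hx₀, ← hmean, div_eq_mul_inv,
    ← lintegral_mul_const _ ENNReal.measurable_ofReal]
  exact (hindep.measure_preimage_eq_lintegral hR hΘ hS).trans (lintegral_congr_ae hcond)

theorem pareto_dirichlet_margin_general (d : ℕ)
    {Ω : Type*} [MeasurableSpace Ω] (P : Measure Ω) [IsProbabilityMeasure P]
    (R Θ : Ω → ℝ) (hR : Measurable R) (hΘ : Measurable Θ)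
    (hindep : IndepFun R Θ P)
    (hPareto : ∀ t : ℝ, 1 ≤ t → P {ω | t < R ω} = ENNReal.ofReal (1 / t))
    (hΘ01 : ∀ᵐ ω ∂P, Θ ω ∈ Set.Icc (0 : ℝ) 1)
    (hmean : ∫ ω, Θ ω ∂P = 1 / d) :
    (∀ x : ℝ, 1 ≤ x → P {ω | x < R ω * Θ ω} = ENNReal.ofReal (1 / (d * x))) ∧
    (∀ u : ℝ, 1 ≤ u → 1 / (1 - (P {ω | R ω * Θ ω ≤ u}).toReal) = d * u) := by
  have htail : ∀ x : ℝ, 1 ≤ x → P {ω | x < R ω * Θ ω} = ENNReal.ofReal (1 / (d * x)) :=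
    fun x hx ↦ by
      rw [measure_lt_mul_eq_ofReal_integral_div hR hΘ hindep hPareto hΘ01 hx, hmean, div_div]
  refine ⟨htail, fun u hu ↦ ?_⟩
  have hcompl : {ω | R ω * Θ ω ≤ u} = {ω | u < R ω * Θ ω}ᶜ := by
    ext ω
    simp [not_lt]
  have hmeas : MeasurableSet {ω | u < R ω * Θ ω} :=
    measurableSet_lt measurable_const (hR.mul hΘ)
  have hu₀ : 0 ≤ u := zero_le_one.trans hu
  rw [← measureReal_def, hcompl, probReal_compl_eq_one_sub hmeas, measureReal_def,
    htail u hu, toReal_ofReal (by positivity), _root_.sub_sub_cancel, one_div_one_div]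

/-- Simulation model, part (i):  `R` unit-Pareto (`P(R > t) = 1/t` for `t ≥ 1`, `R ≥ 1` a.s.),
`Θ_j ∈ [0,1]` a.s. with `E[Θ_j] = 1/d`, independent of `R`.  Then
`P(R·Θ_j > x) = 1/(d·x)` for every `x ≥ 1`, and consequently the cdf `F_j` of
`X_j = R·Θ_j` satisfies `1/(1 − F_j(u)) = d·u` for all `u ≥ 1`. -/
theorem pareto_dirichlet_margin (d : ℕ) (hd : 1 ≤ d)
    {Ω : Type*} [MeasurableSpace Ω] (P : Measure Ω) [IsProbabilityMeasure P]
    (R Θ : Ω → ℝ) (hR : Measurable R) (hΘ : Measurable Θ)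
    (hindep : IndepFun R Θ P)
    (hPareto : ∀ t : ℝ, 1 ≤ t → P {ω | t < R ω} = ENNReal.ofReal (1 / t))
    (hR1 : ∀ᵐ ω ∂P, 1 ≤ R ω)
    (hΘ01 : ∀ᵐ ω ∂P, Θ ω ∈ Set.Icc (0 : ℝ) 1)
    (hmean : ∫ ω, Θ ω ∂P = 1 / d) :
    (∀ x : ℝ, 1 ≤ x → P {ω | x < R ω * Θ ω} = ENNReal.ofReal (1 / (d * x))) ∧
    (∀ u : ℝ, 1 ≤ u → 1 / (1 - (P {ω | R ω * Θ ω ≤ u}).toReal) = d * u) :=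
  pareto_dirichlet_margin_general d P R Θ hR hΘ hindep hPareto hΘ01 hmean
end

section
/- Let d ≥ 1. On a probability space, let R be unit-Pareto (P(R > t) = 1/t for all t ≥ 1, R ≥ 1 a.s.) and let Θ = (Θ_1, …, Θ_d) be a random vector, independent of R, supported on the unit simplex (Θ_j ≥ 0 and Θ_1 + ⋯ + Θ_d = 1 a.s.) with E[Θ_j] = 1/d for every j. Set X = RΘ, let F_j be the cdf of X_j, and V_j = 1/(1 − F_j(X_j)). Then for every x ∈ (0,∞)^d and every t > d / min_{j} x_j, t · P(∃ j ∈ {1,…,d} : V_j > t·x_j) = d · E[max_{j=1,…,d} Θ_j / x_j]. -/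
/-!
Conditioning on an independent `Y` with `0 ≤ Y ≤ c`, the Pareto tail gives `P(R·Y > c) = E[Y]/c`
exactly. With `Y = Θ_j` this yields `1 − F_j(u) = 1/(d·u)` for `u ≥ 1`, so `V_j = d·X_j` when
`X_j ≥ 1`, while for `X_j < 1` both `V_j` and `d·X_j` are at most `d < t·x_j`. Hence
`{∃ j, V_j > t·x_j} = {R · max_j Θ_j/x_j > t/d}`, and since `max_j Θ_j/x_j ≤ max_j 1/x_j < t/d`,
the same formula with `Y = max_j Θ_j/x_j` gives the probability `d·E[max_j Θ_j/x_j]/t`.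
-/

open MeasureTheory ProbabilityTheory ENNReal

section ParetoTail

variable {Ω : Type*} [MeasurableSpace Ω] {P : Measure Ω} {R : Ω → ℝ}

lemma pareto_measure_lt_mul_const
    (hPareto : ∀ t : ℝ, 1 ≤ t → P {ω | t < R ω} = ENNReal.ofReal (1 / t))
    {c s : ℝ} (hc : 0 < c) (hs₀ : 0 ≤ s) (hsc : s ≤ c) :
    P {ω | c < R ω * s} = ENNReal.ofReal (s / c) := by
  rcases hs₀.eq_or_lt with rfl | hs
  · simp [hc.not_gt]
  · have hset : {ω | c < R ω * s} = {ω | c / s < R ω} := by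
      ext ω; exact (div_lt_iff₀ hs).symm
    rw [hset, hPareto _ ((one_le_div hs).2 hsc), one_div_div]

variable [IsProbabilityMeasure P]

lemma ProbabilityTheory.IndepFun.pareto_measure_lt_mul (hR : Measurable R)
    (hPareto : ∀ t : ℝ, 1 ≤ t → P {ω | t < R ω} = ENNReal.ofReal (1 / t))
    {G : Ω → ℝ} (hG : Measurable G) (hind : IndepFun R G P)
    {c : ℝ} (hc : 0 < c) (hGc : ∀ᵐ ω ∂P, 0 ≤ G ω ∧ G ω ≤ c) :
    P {ω | c < R ω * G ω} = ENNReal.ofReal ((∫ ω, G ω ∂P) / c) := by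
  have hS : MeasurableSet {p : ℝ × ℝ | c < p.2 * p.1} :=
    measurableSet_lt measurable_const (measurable_snd.mul measurable_fst)
  have hlaw : P.map (fun ω => (G ω, R ω)) = (P.map G).prod (P.map R) :=
    (indepFun_iff_map_prod_eq_prod_map_map hG.aemeasurable hR.aemeasurable).1 hind.symm
  have hsection : ∀ᵐ s ∂(P.map G),
      P.map R (Prod.mk s ⁻¹' {p : ℝ × ℝ | c < p.2 * p.1}) = ENNReal.ofReal (s / c) := by
    have hGc' : ∀ᵐ s ∂(P.map G), 0 ≤ s ∧ s ≤ c :=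
      (ae_map_iff hG.aemeasurable (measurableSet_Icc (a := 0) (b := c))).2 hGc
    filter_upwards [hGc'] with s hs
    change P.map R {r | c < r * s} = _
    rw [Measure.map_apply hR (measurableSet_lt measurable_const (by fun_prop))]
    exact pareto_measure_lt_mul_const hPareto hc hs.1 hs.2
  have hint : Integrable (fun ω => G ω / c) P :=
    (Integrable.of_bound hG.aestronglyMeasurable c
      (hGc.mono fun ω h => by rw [Real.norm_of_nonneg h.1]; exact h.2)).div_const c
  have hnonneg : 0 ≤ᵐ[P] fun ω => G ω / c := hGc.mono fun ω h => div_nonneg h.1 hc.le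
  calc P {ω | c < R ω * G ω}
      = (P.map G).prod (P.map R) {p : ℝ × ℝ | c < p.2 * p.1} := by
        rw [← hlaw, Measure.map_apply (hG.prodMk hR) hS]; rfl
    _ = ∫⁻ ω, ENNReal.ofReal (G ω / c) ∂P := by
        rw [Measure.prod_apply hS, lintegral_congr_ae hsection,
          lintegral_map (by fun_prop) hG]
    _ = ENNReal.ofReal ((∫ ω, G ω ∂P) / c) := by
        rw [← ofReal_integral_eq_lintegral_ofReal hint hnonneg, integral_div]

lemma ProbabilityTheory.IndepFun.pareto_cdf_mul (hR : Measurable R)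
    (hPareto : ∀ t : ℝ, 1 ≤ t → P {ω | t < R ω} = ENNReal.ofReal (1 / t))
    {Y : Ω → ℝ} (hY : Measurable Y) (hind : IndepFun R Y P)
    (hY01 : ∀ᵐ ω ∂P, 0 ≤ Y ω ∧ Y ω ≤ 1) {u : ℝ} (hu : 1 ≤ u) :
    (P {ω | R ω * Y ω ≤ u}).toReal = 1 - (∫ ω, Y ω ∂P) / u := by
  have hu₀ : 0 < u := one_pos.trans_le hu
  have hYu : ∀ᵐ ω ∂P, 0 ≤ Y ω ∧ Y ω ≤ u := hY01.mono fun ω h => ⟨h.1, h.2.trans hu⟩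
  have hmean₀ : 0 ≤ ∫ ω, Y ω ∂P := integral_nonneg_of_ae (hY01.mono fun ω h => h.1)
  have hmean₁ : ∫ ω, Y ω ∂P ≤ 1 := by
    simpa using integral_mono_of_nonneg (hY01.mono fun ω h => h.1) (integrable_const (1 : ℝ))
      (hY01.mono fun ω h => h.2)
  have hratio : (∫ ω, Y ω ∂P) / u ≤ 1 := (div_le_one hu₀).2 (hmean₁.trans hu)
  have hcompl : {ω | R ω * Y ω ≤ u} = {ω | u < R ω * Y ω}ᶜ := by
    ext ω; simp [not_lt]
  rw [hcompl, prob_compl_eq_one_sub (measurableSet_lt measurable_const (by fun_prop)),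
    hind.pareto_measure_lt_mul hR hPareto hY hu₀ hYu,
    ENNReal.toReal_sub_of_le (ofReal_le_one.2 hratio) one_ne_top, toReal_one,
    toReal_ofReal (div_nonneg hmean₀ hu₀.le)]

end ParetoTail

lemma lt_inv_one_sub_iff_of_pareto_cdf {F : ℝ → ℝ} (hF : Monotone F) {d s : ℝ}
    (hd : 0 < d) (hds : d ≤ s) (hF₁ : ∀ u, 1 ≤ u → F u = 1 - 1 / (d * u)) (v : ℝ) :
    s < (1 - F v)⁻¹ ↔ s < d * v := by
  rcases le_or_gt 1 v with hv | hv
  · rw [hF₁ v hv, _root_.sub_sub_cancel, one_div, inv_inv]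
  · have hFv : 1 / d ≤ 1 - F v := by
      have := hF hv.le
      rw [hF₁ 1 le_rfl, mul_one] at this
      linarith
    have hinv : (1 - F v)⁻¹ ≤ d := by
      simpa using inv_anti₀ (by positivity) hFv
    exact iff_of_false (by linarith) (by nlinarith)

lemma monotone_toReal_measure_setOf_le {Ω : Type*} [MeasurableSpace Ω] (P : Measure Ω)
    [IsFiniteMeasure P] (Y : Ω → ℝ) : Monotone fun u => (P {ω | Y ω ≤ u}).toReal :=
  fun _ _ huv => toReal_mono (measure_ne_top P _) (measure_mono fun _ h => h.trans huv)

lemma exists_lt_mul_iff_lt_mul_ciSup {ι : Type*} [Finite ι] [Nonempty ι] {r : ℝ} (hr : 0 ≤ r)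
    (c : ℝ) (f : ι → ℝ) : (∃ i, c < r * f i) ↔ c < r * ⨆ i, f i := by
  rw [Real.mul_iSup_of_nonneg hr, lt_ciSup_iff (Finite.bddAbove_range _)]

/-- Pre-asymptotic exactness in the simulation model `X = RΘ`:
`R` unit-Pareto, `Θ` on the unit simplex with `E[Θ_j] = 1/d`, independent of `R`;
`F_j` is the cdf of `X_j = R·Θ_j` and `V_j = 1/(1 − F_j(X_j))`.  Then for every
`x ∈ (0,∞)^d` and every `t > d / min_j x_j` (i.e. `t > d/x_j` for all `j`),
`t · P(∃ j : V_j > t·x_j) = d · E[max_j Θ_j / x_j]`. -/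
theorem pareto_dirichlet_tail_identity (d : ℕ) (hd : 1 ≤ d)
    {Ω : Type*} [MeasurableSpace Ω] (P : Measure Ω) [IsProbabilityMeasure P]
    (R : Ω → ℝ) (Θ : Ω → Fin d → ℝ) (hR : Measurable R) (hΘ : Measurable Θ)
    (hindep : IndepFun R Θ P)
    (hPareto : ∀ t : ℝ, 1 ≤ t → P {ω | t < R ω} = ENNReal.ofReal (1 / t))
    (hR1 : ∀ᵐ ω ∂P, 1 ≤ R ω)
    (hsimplex : ∀ᵐ ω ∂P, (∀ j, 0 ≤ Θ ω j) ∧ ∑ j, Θ ω j = 1)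
    (hmean : ∀ j, ∫ ω, Θ ω j ∂P = 1 / d)
    (F : Fin d → ℝ → ℝ)
    (hF : ∀ j u, F j u = (P {ω | R ω * Θ ω j ≤ u}).toReal)
    (V : Ω → Fin d → ℝ)
    (hV : ∀ ω j, V ω j = (1 - F j (R ω * Θ ω j))⁻¹)
    (x : Fin d → ℝ) (hx : ∀ j, 0 < x j)
    (t : ℝ) (ht : ∀ j, d / x j < t) :
    t * (P {ω | ∃ j, t * x j < V ω j}).toReal
      = d * ∫ ω, (⨆ j, Θ ω j / x j) ∂P := by
  have : NeZero d := ⟨Nat.one_le_iff_ne_zero.1 hd⟩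
  have hd₀ : (0 : ℝ) < d := by exact_mod_cast hd
  have htx : ∀ j, d < t * x j := fun j => (div_lt_iff₀ (hx j)).1 (ht j)
  have ht₀ : 0 < t := (div_pos hd₀ (hx 0)).trans (ht 0)
  have htd : 0 < t / d := div_pos ht₀ hd₀
  have hΘ01 : ∀ᵐ ω ∂P, ∀ j, 0 ≤ Θ ω j ∧ Θ ω j ≤ 1 := hsimplex.mono fun ω hω j =>
    ⟨hω.1 j, hω.2 ▸ Finset.single_le_sum (fun i _ => hω.1 i) (Finset.mem_univ j)⟩
  have hF_mono : ∀ j, Monotone (F j) := fun j => by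
    simpa only [← hF] using monotone_toReal_measure_setOf_le P fun ω => R ω * Θ ω j
  have hF_pareto : ∀ j u, 1 ≤ u → F j u = 1 - 1 / (d * u) := fun j u hu => by
    have hindj : IndepFun R (fun ω => Θ ω j) P :=
      hindep.comp measurable_id (measurable_pi_apply j)
    rw [hF, hindj.pareto_cdf_mul hR hPareto (by fun_prop) (hΘ01.mono fun ω h => h j) hu,
      hmean, div_div]
  set G : Ω → ℝ := fun ω => ⨆ j, Θ ω j / x j
  have hevent : {ω | ∃ j, t * x j < V ω j} =ᵐ[P] {ω | t / d < R ω * G ω} := by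
    filter_upwards [hR1] with ω hRω
    refine propext ((exists_congr fun j => ?_).trans
      (exists_lt_mul_iff_lt_mul_ciSup (zero_le_one.trans hRω) _ _))
    rw [hV, lt_inv_one_sub_iff_of_pareto_cdf (hF_mono j) hd₀ (htx j).le (hF_pareto j),
      ← mul_div_assoc, div_lt_div_iff₀ hd₀ (hx j), mul_comm _ (d : ℝ)]
  have hGc : ∀ᵐ ω ∂P, 0 ≤ G ω ∧ G ω ≤ t / d := hΘ01.mono fun ω hω =>
    ⟨Real.iSup_nonneg fun j => div_nonneg (hω j).1 (hx j).le, ciSup_le fun j =>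
      (div_le_div_of_nonneg_right (hω j).2 (hx j).le).trans <| by
        rw [div_le_div_iff₀ (hx j) hd₀]; linarith [htx j]⟩
  have hmax : Measurable fun θ : Fin d → ℝ => ⨆ j, θ j / x j := by fun_prop
  have hindG : IndepFun R G P := hindep.comp measurable_id hmax
  rw [measure_congr hevent, hindG.pareto_measure_lt_mul hR hPareto (by fun_prop) htd hGc,
    toReal_ofReal (div_nonneg (integral_nonneg_of_ae (hGc.mono fun ω h => h.1)) htd.le)]
  field_simp [ht₀.ne']
end
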